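/- arXiv:1303.1062 — 2 statements merged into one kernel-verified Lean document; each statement's English description precedes it below -/
import Mathlib

section
/- Let A be a ring with involution and D ⊆ A a commutative subring. Let u, v ∈ A be partial isometries (u·u⋆·u = u and v·v⋆·v = v) with u⋆·u ∈ D and v⋆·v ∈ D. If there exist d, d′ ∈ D with u = v·d and v = u·d′, then u·u⋆ = v·v⋆ and u⋆·u = v⋆·v. -/
/-- Algebraic content of Corollary 3.3 + Lemma 3.7: if `u, v` are partial isometries with
initial projections in a commutative subring `D`, and `u = v·d`, `v = u·d′` for some
`d, d′ ∈ D`, then `u·u⋆ = v·v⋆` and `u⋆·u = v⋆·v`. -/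
theorem stmt_2 {A : Type*} [Ring A] [StarRing A] (D : Subring A)
    (hcomm : ∀ x ∈ D, ∀ y ∈ D, x * y = y * x)
    (u v : A) (hu : u * star u * u = u) (hv : v * star v * v = v)
    (huD : star u * u ∈ D) (hvD : star v * v ∈ D)
    (d d' : A) (hd : d ∈ D) (hd' : d' ∈ D)
    (h1 : u = v * d) (h2 : v = u * d') :
    u * star u = v * star v ∧ star u * u = star v * v := by
  have hup : u * (star u * u) = u := by rw [← mul_assoc, hu]
  have hvq : v * (star v * v) = v := by rw [← mul_assoc, hv]
  have hc1 : star u * u * d' = d' * (star u * u) := hcomm _ huD _ hd'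
  have hc2 : star v * v * d = d * (star v * v) := hcomm _ hvD _ hd
  have hvp : v * (star u * u) = v := by
    rw [h2, mul_assoc, ← hc1, ← mul_assoc, hup]
  have huq : u * (star v * v) = u := by
    rw [h1, mul_assoc, ← hc2, ← mul_assoc, hvq]
  have h3 : (star u * u) * (star v * v) = star u * u := by rw [mul_assoc, huq]
  have h4 : (star v * v) * (star u * u) = star v * v := by rw [mul_assoc, hvp]
  have key2 : star u * u = star v * v := by
    rw [← h3, hcomm _ huD _ hvD, h4]
  have h5 : u * (star u * v) = v := by
    rw [h2]; simp only [← mul_assoc]; rw [hu]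
  have h6 : v * (star v * u) = u := by
    rw [h1]; simp only [← mul_assoc]; rw [hv]
  have h7 : (u * star u) * (v * star v) = v * star v := by
    calc (u * star u) * (v * star v) = (u * (star u * v)) * star v := by
          simp only [mul_assoc]
      _ = v * star v := by rw [h5]
  have h8 : (v * star v) * (u * star u) = u * star u := by
    calc (v * star v) * (u * star u) = (v * (star v * u)) * star u := by
          simp only [mul_assoc]
      _ = u * star u := by rw [h6]
  have key1 : u * star u = v * star v := by
    have h9 := congrArg star h7
    simp only [star_mul, star_star] at h9
    exact h8.symm.trans h9
  exact ⟨key1, key2⟩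
end

section
/- Let H be a complex Hilbert space, let M be a von Neumann algebra on H (a unital *-subalgebra of the bounded operators B(H) equal to its double commutant), and let D ⊆ M be a commutative von Neumann subalgebra. Let S = {U ∈ M : U is unitary and U·D·U⋆ = D}, and assume that M equals the double commutant of S. Let 𝒜 be the set of atoms of D, i.e., nonzero orthogonal projections Q ∈ D such that every orthogonal projection P ∈ D with P·Q = P equals 0 or Q, and let X be the orthogonal projection of H onto the closed linear span of the union of the ranges of the projections in 𝒜. Then X ∈ D and X is a central projection of M: X·T = T·X for every T ∈ M. -/
section Aux
variable {H : Type*} [NormedAddCommGroup H] [InnerProductSpace ℂ H] [CompleteSpace H]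

lemma key_comm (X T : H →L[ℂ] H) (hXsa : IsSelfAdjoint X) (hXi : X * X = X)
    (hT : ∀ x, T (X x) ∈ Set.range X) (hT' : ∀ x, (star T) (X x) ∈ Set.range X) :
    X * T = T * X := by
  have hfix : ∀ y ∈ Set.range X, X y = y := by
    rintro _ ⟨z, rfl⟩
    have := congrArg (fun f : H →L[ℂ] H => f z) hXi
    simpa [ContinuousLinearMap.mul_apply] using this
  have h1 : X * (T * X) = T * X := by
    ext x
    simpa [ContinuousLinearMap.mul_apply] using hfix _ (hT x)
  have h2 : X * (star T * X) = star T * X := by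
    ext x
    simpa [ContinuousLinearMap.mul_apply] using hfix _ (hT' x)
  have h3 := congrArg star h2
  simp only [star_mul, star_star, hXsa.star_eq, mul_assoc] at h3 h1 ⊢
  rw [← h3, h1]

omit [CompleteSpace H] in
lemma invar_closure (T : H →L[ℂ] H) (s : Set H)
    (hT : ∀ x ∈ s, T x ∈ ((Submodule.span ℂ s).topologicalClosure : Set H)) :
    ∀ x ∈ ((Submodule.span ℂ s).topologicalClosure : Set H),
      T x ∈ ((Submodule.span ℂ s).topologicalClosure : Set H) := by
  set p := (Submodule.span ℂ s).topologicalClosure with hp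
  have hle : Submodule.span ℂ s ≤ p.comap (T : H →ₗ[ℂ] H) := Submodule.span_le.2 hT
  have hcl : IsClosed ((p.comap (T : H →ₗ[ℂ] H) : Submodule ℂ H) : Set H) := by
    have : ((p.comap (T : H →ₗ[ℂ] H) : Submodule ℂ H) : Set H) = T ⁻¹' (p : Set H) := rfl
    rw [this]
    exact ((Submodule.span ℂ s).isClosed_topologicalClosure).preimage T.continuous
  have hfin : p ≤ p.comap (T : H →ₗ[ℂ] H) :=
    Submodule.topologicalClosure_minimal _ hle hcl
  intro x hx
  exact hfin hx

end Aux

/-- Proposition 2.2: Let `M` be a von Neumann algebra on a complex Hilbert space `H` and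
`D ⊆ M` a commutative von Neumann subalgebra.  Let `S` be the set of unitaries `U ∈ M`
with `U·D·U⋆ = D`, and assume `M` is the double commutant of `S`.  If `X` is the orthogonal
projection of `H` onto the closed linear span of the ranges of the atoms of `D`, then
`X ∈ D` and `X` is central in `M`. -/
theorem stmt_9 {H : Type*} [NormedAddCommGroup H] [InnerProductSpace ℂ H] [CompleteSpace H]
    (M D : VonNeumannAlgebra H)
    (hDM : (D : Set (H →L[ℂ] H)) ⊆ (M : Set (H →L[ℂ] H)))
    (hDcomm : ∀ x ∈ D, ∀ y ∈ D, x * y = y * x)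
    (S : Set (H →L[ℂ] H))
    (hS : S = {U | U ∈ M ∧ star U * U = 1 ∧ U * star U = 1 ∧
      (fun d => U * d * star U) '' (D : Set (H →L[ℂ] H)) = (D : Set (H →L[ℂ] H))})
    (hMS : Set.centralizer (Set.centralizer S) = (M : Set (H →L[ℂ] H)))
    (𝒜 : Set (H →L[ℂ] H))
    (h𝒜 : 𝒜 = {Q | Q ∈ D ∧ Q ≠ 0 ∧ IsSelfAdjoint Q ∧ Q * Q = Q ∧
      ∀ P ∈ D, IsSelfAdjoint P → P * P = P → P * Q = P → P = 0 ∨ P = Q})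
    (X : H →L[ℂ] H) (hXsa : IsSelfAdjoint X) (hXi : X * X = X)
    (hXrange : Set.range X =
      ((Submodule.span ℂ (⋃ Q ∈ 𝒜, Set.range Q)).topologicalClosure : Set H)) :
    X ∈ D ∧ ∀ T ∈ M, X * T = T * X := by
  set s : Set H := ⋃ Q ∈ 𝒜, Set.range Q with hs
  have hsub : s ⊆ Set.range X := by
    rw [hXrange]
    exact fun x hx => (Submodule.span ℂ s).le_topologicalClosure (Submodule.subset_span hx)
  have crit : ∀ T : H →L[ℂ] H, (∀ x ∈ s, T x ∈ Set.range X) → ∀ x, T (X x) ∈ Set.range X := by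
    intro T hT x
    have h1 : ∀ y ∈ s, T y ∈ ((Submodule.span ℂ s).topologicalClosure : Set H) := by
      intro y hy; rw [← hXrange]; exact hT y hy
    have h2 := invar_closure T s h1 (X x) (by rw [← hXrange]; exact ⟨x, rfl⟩)
    rw [hXrange]; exact h2
  -- S is star-closed
  have hstarS : ∀ U ∈ S, star U ∈ S := by
    intro U hU
    rw [hS] at hU ⊢
    obtain ⟨hUM, hU1, hU2, hUD⟩ := hU
    refine ⟨star_mem hUM, by simpa using hU2, by simpa using hU1, ?_⟩
    simp only [star_star]
    ext d
    constructor
    · rintro ⟨e, he, rfl⟩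
      rw [← hUD] at he
      obtain ⟨f, hf, rfl⟩ := he
      have h : star U * (U * f * star U) * U = f := by
        simp only [← mul_assoc, hU1, one_mul]
        rw [mul_assoc, hU1, mul_one]
      show star U * (U * f * star U) * U ∈ (D : Set (H →L[ℂ] H))
      rw [h]; exact hf
    · intro hd
      refine ⟨U * d * star U, ?_, ?_⟩
      · rw [← hUD]; exact ⟨d, hd, rfl⟩
      · simp only [← mul_assoc, hU1, one_mul]
        rw [mul_assoc, hU1, mul_one]
  -- conjugation by elements of S preserves atoms
  have hconj : ∀ U ∈ S, ∀ Q ∈ 𝒜, U * Q * star U ∈ 𝒜 := by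
    intro U hU Q hQ
    rw [hS] at hU
    obtain ⟨hUM, hU1, hU2, hUD⟩ := hU
    rw [h𝒜] at hQ ⊢
    obtain ⟨hQD, hQ0, hQsa, hQi, hQmin⟩ := hQ
    have hundo : ∀ R : H →L[ℂ] H, star U * (U * R * star U) * U = R := by
      intro R
      simp only [← mul_assoc, hU1, one_mul]
      rw [mul_assoc, hU1, mul_one]
    refine ⟨by rw [← SetLike.mem_coe, ← hUD]; exact ⟨Q, hQD, rfl⟩, ?_, ?_, ?_, ?_⟩
    · intro h
      apply hQ0
      rw [← hundo Q, h]
      simp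
    · simp only [IsSelfAdjoint, star_mul, star_star, hQsa.star_eq, mul_assoc]
    · have : U * Q * star U * (U * Q * star U) = U * (Q * ((star U * U) * (Q * star U))) := by
        simp only [mul_assoc]
      rw [this, hU1, one_mul, ← mul_assoc Q Q, hQi]
      simp only [mul_assoc]
    · intro P hPD hPsa hPi hPQ
      set P' := star U * P * U with hP'
      have hP'D : P' ∈ D := by
        rw [← SetLike.mem_coe] at hPD ⊢
        rw [← hUD] at hPD
        obtain ⟨f, hf, rfl⟩ := hPD
        show star U * (U * f * star U) * U ∈ (D : Set (H →L[ℂ] H))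
        rw [hundo f]; exact hf
      have hP'sa : IsSelfAdjoint P' := by
        simp only [hP', IsSelfAdjoint, star_mul, star_star, hPsa.star_eq, mul_assoc]
      have hP'i : P' * P' = P' := by
        have : P' * P' = star U * (P * ((U * star U) * (P * U))) := by
          simp only [hP', mul_assoc]
        rw [this, hU2, one_mul, ← mul_assoc P P, hPi]
        simp only [hP', mul_assoc]
      have h1 : P * (U * Q) = P * U := by
        have h := congrArg (fun z => z * U) hPQ
        simp only [mul_assoc, hU1, mul_one] at h
        exact h
      have hP'Q : P' * Q = P' := by
        calc P' * Q = star U * (P * (U * Q)) := by simp only [hP', mul_assoc]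
          _ = star U * (P * U) := by rw [h1]
          _ = P' := by simp only [hP', mul_assoc]
      have hPrec : U * P' * star U = P := by
        rw [hP']
        calc U * (star U * P * U) * star U = (U * star U) * (P * (U * star U)) := by
              simp only [mul_assoc]
          _ = P := by rw [hU2, one_mul, mul_one]
      rcases hQmin P' hP'D hP'sa hP'i hP'Q with h | h
      · left; rw [← hPrec, h]; simp
      · right; rw [← hPrec, h]
  -- elements of S map s into range X
  have hmaps : ∀ U ∈ S, ∀ x ∈ s, U x ∈ Set.range X := by
    intro U hU x hx
    have hU' := hU
    rw [hS] at hU'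
    obtain ⟨hUM, hU1, hU2, hUD⟩ := hU'
    rw [hs] at hx
    simp only [Set.mem_iUnion] at hx
    obtain ⟨Q, hQ, y, rfl⟩ := hx
    apply hsub
    have hmem : U (Q y) ∈ Set.range (U * Q * star U) := by
      refine ⟨U y, ?_⟩
      have : (U * Q * star U) * U = U * Q := by
        rw [mul_assoc, hU1, mul_one]
      calc (U * Q * star U) (U y) = ((U * Q * star U) * U) y := rfl
        _ = (U * Q) y := by rw [this]
        _ = U (Q y) := rfl
    rw [hs]
    simp only [Set.mem_iUnion]
    exact ⟨U * Q * star U, hconj U hU Q hQ, hmem⟩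
  -- X commutes with every element of S
  have hXS : ∀ U ∈ S, X * U = U * X := by
    intro U hU
    exact key_comm X U hXsa hXi (crit U (hmaps U hU))
      (crit (star U) (hmaps (star U) (hstarS U hU)))
  -- the commutant of D is star-closed, and its elements map s into range X
  have hstarD : ∀ T ∈ Set.centralizer (D : Set (H →L[ℂ] H)),
      star T ∈ Set.centralizer (D : Set (H →L[ℂ] H)) := by
    intro T hT
    rw [Set.mem_centralizer_iff]
    intro m hm
    have h := hT (star m) (star_mem (SetLike.mem_coe.mp hm))
    calc m * star T = star (T * star m) := by simp [star_mul]
      _ = star (star m * T) := by rw [h]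
      _ = star T * m := by simp [star_mul]
  have hDmaps : ∀ T ∈ Set.centralizer (D : Set (H →L[ℂ] H)), ∀ x ∈ s, T x ∈ Set.range X := by
    intro T hT x hx
    rw [hs] at hx
    simp only [Set.mem_iUnion] at hx
    obtain ⟨Q, hQ, y, rfl⟩ := hx
    have hQD : Q ∈ D := by rw [h𝒜] at hQ; exact hQ.1
    have hc : Q * T = T * Q := hT Q (SetLike.mem_coe.mpr hQD)
    apply hsub
    rw [hs]
    simp only [Set.mem_iUnion]
    refine ⟨Q, hQ, T y, ?_⟩
    calc Q (T y) = (Q * T) y := rfl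
      _ = (T * Q) y := by rw [hc]
      _ = T (Q y) := rfl
  have hXD : X ∈ D := by
    rw [← SetLike.mem_coe, ← D.centralizer_centralizer]
    intro T hT
    exact (key_comm X T hXsa hXi (crit T (hDmaps T hT))
      (crit (star T) (hDmaps (star T) (hstarD T hT)))).symm
  refine ⟨hXD, ?_⟩
  intro T hT
  have hXcentS : X ∈ Set.centralizer S := by
    intro U hU
    exact (hXS U hU).symm
  have hTmem : T ∈ Set.centralizer (Set.centralizer S) := by rw [hMS]; exact hT
  exact hTmem X hXcentS
end
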